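/- arXiv:math/0602063 — 10 statements merged into one kernel-verified Lean document; each statement's English description precedes it below -/
import Mathlib

section
/- Let V be a finite antichain in ℝ^d that is generic, i.e., no two distinct points of V share any coordinate value. Then the Scarf complex Δ_V, consisting of all subsets U ⊆ V such that the componentwise maximum ⋁U lies on the orthogonal surface S_V, is a simplicial complex (i.e., it is closed under taking subsets). -/
open Finset

/-- Strict dominance: `p` strictly dominates `w` in every coordinate. -/
def StrictDom {d : ℕ} (p w : Fin d → ℝ) : Prop := ∀ i, w i < p i

/-- A point lies on the orthogonal surface `S_V`: it dominates some vertex of `V`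
and strictly dominates no vertex of `V`. -/
def InSurface {d : ℕ} (V : Finset (Fin d → ℝ)) (p : Fin d → ℝ) : Prop :=
  (∃ v ∈ V, v ≤ p) ∧ ∀ w ∈ V, ¬ StrictDom p w

/-- The join (componentwise maximum) of a nonempty finite set of points. -/
def joinOf {d : ℕ} (U : Finset (Fin d → ℝ)) (hU : U.Nonempty) : Fin d → ℝ :=
  fun i => U.sup' hU (fun v => v i)

/-- For a finite generic antichain `V`, the Scarf complex
`Δ_V = {U ⊆ V : ⋁U ∈ S_V}` is closed under taking (nonempty) subsets,
i.e. it is a simplicial complex. -/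
theorem stmt_1 (d : ℕ) (V : Finset (Fin d → ℝ))
    (hV : IsAntichain (· ≤ ·) (V : Set (Fin d → ℝ)))
    (hgen : ∀ u ∈ V, ∀ v ∈ V, u ≠ v → ∀ i, u i ≠ v i)
    (U W : Finset (Fin d → ℝ)) (hUV : U ⊆ V) (hWU : W ⊆ U) (hW : W.Nonempty)
    (hUs : InSurface V (joinOf U (hW.mono hWU))) :
    InSurface V (joinOf W hW) := by
  have hle : ∀ i, joinOf W hW i ≤ joinOf U (hW.mono hWU) i := fun i =>
    Finset.sup'_mono (fun v => v i) hWU hW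
  constructor
  · obtain ⟨w, hw⟩ := hW
    exact ⟨w, hUV (hWU hw), fun i => Finset.le_sup' (fun v => v i) hw⟩
  · intro x hx hstrict
    exact hUs.2 x hx fun i => lt_of_lt_of_le (hstrict i) (hle i)
end

section
/- Let V be a finite antichain in ℝ^d, let p be a generated point on S_V (i.e., p = ⋁G for some G ⊆ D_p), and suppose p has two minimal generating sets of different cardinalities. Then there exist three minima x, u, v ∈ D_p and two coordinates i, j such that u_i < v_i = x_i = p_i and v_j < u_j = x_j = p_j. -/
open Finset

/-- `G` is a generating set for `p`: its members lie below `p` and belong to `V`,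
and its componentwise maximum is `p` (each coordinate of `p` is attained). -/
def GenSet {d : ℕ} (V : Finset (Fin d → ℝ)) (p : Fin d → ℝ) (G : Finset (Fin d → ℝ)) : Prop :=
  G ⊆ V ∧ (∀ v ∈ G, v ≤ p) ∧ ∀ i, ∃ v ∈ G, v i = p i

/-- A generating set is minimal if removing any element destroys the generating property. -/
def MinGen {d : ℕ} (V : Finset (Fin d → ℝ)) (p : Fin d → ℝ) (G : Finset (Fin d → ℝ)) : Prop :=
  GenSet V p G ∧ ∀ v ∈ G, ¬ GenSet V p (G.erase v)

lemma stmt3_aux (d : ℕ) (V : Finset (Fin d → ℝ)) (p : Fin d → ℝ)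
    (G₁ G₂ : Finset (Fin d → ℝ)) (hG₁ : MinGen V p G₁) (hG₂ : GenSet V p G₂)
    (h : ¬ ∃ x u v, x ∈ V ∧ u ∈ V ∧ v ∈ V ∧ x ≤ p ∧ u ≤ p ∧ v ≤ p ∧
      ∃ i j : Fin d, u i < v i ∧ v i = x i ∧ x i = p i ∧
        v j < u j ∧ u j = x j ∧ x j = p j) : G₁.card ≤ G₂.card := by
  classical
  -- every element of G₁ has a private coordinate
  have priv : ∀ u ∈ G₁, ∃ i, u i = p i ∧ ∀ w ∈ G₁, w i = p i → w = u := by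
    intro u hu
    have hne := hG₁.2 u hu
    have h1 : G₁.erase u ⊆ V := (erase_subset u G₁).trans hG₁.1.1
    have h2 : ∀ v ∈ G₁.erase u, v ≤ p := fun v hv => hG₁.1.2.1 v (mem_of_mem_erase hv)
    have h3 : ¬ ∀ i, ∃ v ∈ G₁.erase u, v i = p i := by
      intro h3; exact hne ⟨h1, h2, h3⟩
    push_neg at h3
    obtain ⟨i, hi⟩ := h3
    obtain ⟨v, hv, hvi⟩ := hG₁.1.2.2 i
    have hveq : v = u := by
      by_contra hne'
      exact hi v (mem_erase.2 ⟨hne', hv⟩) hvi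
    refine ⟨i, hveq ▸ hvi, ?_⟩
    intro w hw hwi
    by_contra hne'
    exact hi w (mem_erase.2 ⟨hne', hw⟩) hwi
  -- map each u ∈ G₁ to an element of G₂ attaining p at u's private coordinate
  let f : (Fin d → ℝ) → (Fin d → ℝ) := fun u =>
    if hu : u ∈ G₁ then (hG₂.2.2 (priv u hu).choose).choose else u
  have hf : ∀ u (hu : u ∈ G₁),
      f u ∈ G₂ ∧ f u (priv u hu).choose = p (priv u hu).choose := by
    intro u hu
    have := (hG₂.2.2 (priv u hu).choose).choose_spec
    simp only [f, dif_pos hu]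
    exact this
  apply Finset.card_le_card_of_injOn f (fun u hu => (hf u hu).1)
  intro u₁ hu₁ u₂ hu₂ hfe
  by_contra hne
  obtain ⟨hi₁, hpriv₁⟩ := (priv u₁ hu₁).choose_spec
  obtain ⟨hi₂, hpriv₂⟩ := (priv u₂ hu₂).choose_spec
  set i := (priv u₁ hu₁).choose
  set j := (priv u₂ hu₂).choose
  set x := f u₁ with hx
  have hxG₂ : x ∈ G₂ := (hf u₁ hu₁).1
  have hxi : x i = p i := (hf u₁ hu₁).2
  have hxj : x j = p j := by rw [show x = f u₂ from hfe]; exact (hf u₂ hu₂).2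
  have hu₂i : u₂ i < p i := by
    have hne' : u₂ i ≠ p i := fun he => hne ((hpriv₁ u₂ hu₂ he).symm)
    exact lt_of_le_of_ne (hG₁.1.2.1 u₂ hu₂ i) hne'
  have hu₁j : u₁ j < p j := by
    have hne' : u₁ j ≠ p j := fun he => hne (hpriv₂ u₁ hu₁ he)
    exact lt_of_le_of_ne (hG₁.1.2.1 u₁ hu₁ j) hne'
  exact h ⟨x, u₂, u₁, hG₂.1 hxG₂, hG₁.1.1 hu₂, hG₁.1.1 hu₁,
    hG₂.2.1 x hxG₂, hG₁.1.2.1 u₂ hu₂, hG₁.1.2.1 u₁ hu₁,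
    i, j, hu₂i.trans_eq hi₁.symm, hi₁.trans hxi.symm, hxi,
    hu₁j.trans_eq hi₂.symm, hi₂.trans hxj.symm, hxj⟩

/-- If a generated point `p ∈ S_V` has two minimal generating sets of
different cardinalities, then there are minima `x, u, v ≤ p` in `V` and coordinates
`i, j` with `u_i < v_i = x_i = p_i` and `v_j < u_j = x_j = p_j`. -/
theorem stmt_3 (d : ℕ) (V : Finset (Fin d → ℝ))
    (hV : IsAntichain (· ≤ ·) (V : Set (Fin d → ℝ)))
    (p : Fin d → ℝ) (hp : InSurface V p)
    (G₁ G₂ : Finset (Fin d → ℝ))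
    (hG₁ : MinGen V p G₁) (hG₂ : MinGen V p G₂) (hcard : G₁.card ≠ G₂.card) :
    ∃ x u v, x ∈ V ∧ u ∈ V ∧ v ∈ V ∧ x ≤ p ∧ u ≤ p ∧ v ≤ p ∧
      ∃ i j : Fin d, u i < v i ∧ v i = x i ∧ x i = p i ∧
        v j < u j ∧ u j = x j ∧ x j = p j := by
  by_contra h
  exact hcard (le_antisymm (stmt3_aux d V p G₁ G₂ hG₁ hG₂.1 h)
    (stmt3_aux d V p G₂ G₁ hG₂ hG₁.1 h))
end

section
/- Let V be a finite antichain in ℝ^d, p ∈ S_V, and u, v ∈ D_p with T_p(u) ⊊ T_p(v), and let i ∈ T_p(v) \ T_p(u). Then there is no point q ∈ S_V with q ≥ p and q ⊳_i v (i.e., q_i = v_i and q_j > v_j for all j ≠ i). In other words, v is not an i-witness for p. -/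
open Finset

/-- The set of tight coordinates of `p` with respect to `v`. -/
def Tight {d : ℕ} (p v : Fin d → ℝ) : Set (Fin d) := {i | p i = v i}

/-- `q` almost strictly dominates `v` with tight coordinate `i`. -/
def AlmostStrict {d : ℕ} (i : Fin d) (q v : Fin d → ℝ) : Prop :=
  q i = v i ∧ ∀ j, j ≠ i → v j < q j

/-- `v` is an `i`-witness for `p`: there is `q ∈ S_V` with `v ≤ p ≤ q` and `q ⊳_i v`. -/
def IsWitness {d : ℕ} (V : Finset (Fin d → ℝ)) (i : Fin d) (v p : Fin d → ℝ) : Prop :=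
  ∃ q, InSurface V q ∧ v ≤ p ∧ p ≤ q ∧ AlmostStrict i q v

/-- If `u, v ∈ D_p` satisfy `T_p(u) ⊊ T_p(v)` and `i ∈ T_p(v) \ T_p(u)`,
then `v` is not an `i`-witness for `p`. -/
theorem stmt_5 (d : ℕ) (V : Finset (Fin d → ℝ))
    (hV : IsAntichain (· ≤ ·) (V : Set (Fin d → ℝ)))
    (p : Fin d → ℝ) (hp : InSurface V p)
    (u v : Fin d → ℝ) (hu : u ∈ V) (hv : v ∈ V) (hup : u ≤ p) (hvp : v ≤ p)
    (hT : Tight p u ⊂ Tight p v) (i : Fin d) (hi : i ∈ Tight p v \ Tight p u) :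
    ¬ IsWitness V i v p := by
  rintro ⟨q, hq, -, hpq, hqi, hqj⟩
  obtain ⟨hiv, hiu⟩ := hi
  refine hq.2 u hu ?_
  intro j
  by_cases hji : j = i
  · subst hji
    have : u j < p j := lt_of_le_of_ne (hup j) (fun h => hiu h.symm)
    calc u j < p j := this
    _ = v j := hiv
    _ = q j := hqi.symm
  · by_cases hjt : j ∈ Tight p u
    · have hjv : j ∈ Tight p v := hT.1 hjt
      have : u j = v j := hjt.symm.trans hjv
      rw [this]; exact hqj j hji
    · have : u j < p j := lt_of_le_of_ne (hup j) (fun h => hjt h.symm)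
      exact lt_of_lt_of_le this (hpq j)
end

section
/- Let V be a finite antichain in ℝ^d, p ∈ S_V, v ∈ D_p with v_i = p_i, and suppose v is not an i-witness for p. Then there exists a minimum u ∈ D_p such that T_p(u) ⊊ T_p(v) and i ∈ T_p(v) \ T_p(u). -/
open Finset

/-- If `v ∈ D_p` has `v_i = p_i` but is not an `i`-witness for `p`,
then there is `u ∈ D_p` with `T_p(u) ⊊ T_p(v)` and `i ∈ T_p(v) \ T_p(u)`. -/
theorem stmt_6 (d : ℕ) (V : Finset (Fin d → ℝ))
    (hV : IsAntichain (· ≤ ·) (V : Set (Fin d → ℝ)))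
    (p : Fin d → ℝ) (hp : InSurface V p)
    (v : Fin d → ℝ) (hv : v ∈ V) (hvp : v ≤ p) (i : Fin d) (hvi : v i = p i)
    (hw : ¬ IsWitness V i v p) :
    ∃ u, u ∈ V ∧ u ≤ p ∧ Tight p u ⊂ Tight p v ∧ i ∈ Tight p v \ Tight p u := by
  classical
  -- choose a small ε > 0 separating v from all strictly larger coordinates of V
  set T : Finset ℝ :=
    insert (1 : ℝ) (((V ×ˢ (Finset.univ : Finset (Fin d))).image
      (fun x => x.1 x.2 - v x.2)).filter (fun r => 0 < r)) with hT
  have hTne : T.Nonempty := ⟨1, Finset.mem_insert_self _ _⟩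
  set ε : ℝ := T.min' hTne with hε
  have hεpos : 0 < ε := by
    have hm := Finset.min'_mem T hTne
    rw [← hε] at hm
    rw [hT] at hm
    rcases Finset.mem_insert.mp hm with h | h
    · rw [h]; norm_num
    · exact (Finset.mem_filter.mp h).2
  have hεsmall : ∀ w ∈ V, ∀ j, v j < w j → v j + ε ≤ w j := by
    intro w hwV j hj
    have hmem : w j - v j ∈ T := by
      rw [hT]
      refine Finset.mem_insert_of_mem (Finset.mem_filter.mpr ⟨?_, by linarith⟩)
      exact Finset.mem_image.mpr ⟨(w, j), Finset.mem_product.mpr ⟨hwV, Finset.mem_univ _⟩, rfl⟩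
    have := Finset.min'_le T _ hmem
    rw [← hε] at this
    linarith
  -- the candidate q
  set q : Fin d → ℝ := fun j => if j = i then v i else max (p j) (v j + ε) with hq
  have hqi : q i = v i := by simp [hq]
  have hqj : ∀ j, j ≠ i → v j < q j := by
    intro j hj
    have : v j + ε ≤ q j := by simp [hq, hj, le_max_right]
    linarith
  have hpq : p ≤ q := by
    intro j
    by_cases hj : j = i
    · subst hj; simp [hq, hvi.symm.le]
    · simp only [hq, hj, if_neg hj]
      exact le_max_left _ _
  -- q cannot be on the surface, so some w ∈ V is strictly dominated by q
  have hnotS : ¬ InSurface V q := fun hS => hw ⟨q, hS, hvp, hpq, hqi, hqj⟩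
  have h1 : ∃ u ∈ V, u ≤ q := ⟨v, hv, le_trans hvp hpq⟩
  have h2 : ∃ w ∈ V, StrictDom q w := by
    by_contra h
    push_neg at h
    exact hnotS ⟨h1, h⟩
  obtain ⟨w, hwV, hwd⟩ := h2
  have hwi : w i < p i := by
    have := hwd i
    rw [hqi, hvi] at this
    exact this
  have hwkey : ∀ j, j ≠ i → w j ≤ v j ∨ w j < p j := by
    intro j hj
    have h1 := hwd j
    simp only [hq, if_neg hj] at h1
    rcases max_cases (p j) (v j + ε) with ⟨he, _⟩ | ⟨he, _⟩
    · right; rw [he] at h1; exact h1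
    · left
      rw [he] at h1
      by_contra hc
      push_neg at hc
      have := hεsmall w hwV j hc
      linarith
  have hwp : w ≤ p := by
    intro j
    by_cases hj : j = i
    · subst hj; exact hwi.le
    · rcases hwkey j hj with h | h
      · exact le_trans h (hvp j)
      · exact h.le
  refine ⟨w, hwV, hwp, ⟨?_, ?_⟩, ?_, ?_⟩
  · -- Tight p w ⊆ Tight p v
    intro j hj
    have hpj : p j = w j := hj
    have hji : j ≠ i := by rintro rfl; exact absurd hpj (by linarith)
    rcases hwkey j hji with h | h
    · have h2 : p j ≤ v j := hpj ▸ h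
      exact le_antisymm h2 (hvp j)
    · linarith [hpj ▸ h]
  · -- not superset: i is in Tight p v but not Tight p w
    intro hsub
    have : i ∈ Tight p w := hsub hvi.symm
    have : p i = w i := this
    linarith
  · exact hvi.symm
  · intro h
    have : p i = w i := h
    linarith
end

section
/- Let V be a finite antichain in ℝ^d and p ∈ S_V with v ∈ D_p and p_i = v_i. Then v is an i-witness for p (i.e., there exists q ∈ S_V with v ≤ p ≤ q, q_i = v_i, and q_j > v_j for all j ≠ i) if and only if there is no w ∈ V with w_i < v_i = p_i such that for every coordinate j ≠ i, either w_j ≤ v_j or w_j < p_j. -/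
open Finset

/-- `V` is suspended: all coordinates are nonnegative and for each coordinate `i`
there is a suspension vertex `M_i · e_i ∈ V` whose height bounds the `i`-th
coordinate of every other vertex. -/
def Suspended {d : ℕ} (V : Finset (Fin d → ℝ)) : Prop :=
  (∀ v ∈ V, ∀ i, 0 ≤ v i) ∧
    ∀ i : Fin d, ∃ M : ℝ, 0 < M ∧ (fun j => if j = i then M else 0) ∈ V ∧
      ∀ v ∈ V, v ≠ (fun j => if j = i then M else 0) → v i < M

/-- For a suspended antichain `V`, `p ∈ S_V`, `v ∈ D_p` with `p_i = v_i`: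
`v` is an `i`-witness for `p` iff there is no obstructor `w ∈ V` with `w_i < v_i = p_i`
and, for every `j ≠ i`, `w_j ≤ v_j` or `w_j < p_j`. -/
theorem stmt_7 (d : ℕ) (V : Finset (Fin d → ℝ))
    (hV : IsAntichain (· ≤ ·) (V : Set (Fin d → ℝ))) (hsusp : Suspended V)
    (p : Fin d → ℝ) (hp : InSurface V p)
    (v : Fin d → ℝ) (hv : v ∈ V) (hvp : v ≤ p) (i : Fin d) (hvi : p i = v i) :
    IsWitness V i v p ↔
      ¬ ∃ w ∈ V, w i < v i ∧ ∀ j, j ≠ i → (w j ≤ v j ∨ w j < p j) := by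
  constructor
  · rintro ⟨q, ⟨-, hq2⟩, -, hpq, hqi, hqs⟩ ⟨w, hw, hwi, hwj⟩
    refine hq2 w hw fun j => ?_
    rcases eq_or_ne j i with rfl | hj
    · calc w j < v j := hwi
        _ = q j := hqi.symm
    · rcases hwj j hj with h | h
      · exact lt_of_le_of_lt h (hqs j hj)
      · exact lt_of_lt_of_le h (hpq j)
  · intro hno
    classical
    set S : Fin d → Finset ℝ := fun j =>
      insert (max (p j) (v j) + 1)
        ((V.filter (fun w => w i < v i ∧ p j ≤ w j ∧ v j < w j)).image (fun w => w j)) with hS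
    have hSne : ∀ j, (S j).Nonempty := fun j => ⟨_, Finset.mem_insert_self _ _⟩
    set q : Fin d → ℝ := fun j => if j = i then v i else (S j).min' (hSne j) with hq
    have hqp : ∀ j, p j ≤ q j := by
      intro j
      by_cases hj : j = i
      · simp [hq, hj, hvi.le, hj ▸ hvi.le]
      · simp only [hq, hj, if_false]
        apply Finset.le_min'
        intro y hy
        rcases Finset.mem_insert.mp hy with rfl | hy
        · linarith [le_max_left (p j) (v j)]
        · obtain ⟨w, hw, rfl⟩ := Finset.mem_image.mp hy
          exact (Finset.mem_filter.mp hw).2.2.1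
    have hqv : ∀ j, j ≠ i → v j < q j := by
      intro j hj
      simp only [hq, hj, if_false]
      apply (Finset.lt_min'_iff _ _).mpr
      intro y hy
      rcases Finset.mem_insert.mp hy with rfl | hy
      · linarith [le_max_right (p j) (v j)]
      · obtain ⟨w, hw, rfl⟩ := Finset.mem_image.mp hy
        exact (Finset.mem_filter.mp hw).2.2.2
    refine ⟨q, ⟨⟨v, hv, fun j => ?_⟩, ?_⟩, hvp, hqp, by simp [hq], hqv⟩
    · by_cases hj : j = i
      · simp [hq, hj]
      · exact (hqv j hj).le
    · intro w hw hsd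
      by_cases hwi : w i < v i
      · -- w is dangerous; by no-obstructor there is a blocking coordinate
        have : ¬ ∀ j, j ≠ i → (w j ≤ v j ∨ w j < p j) := fun h => hno ⟨w, hw, hwi, h⟩
        push_neg at this
        obtain ⟨j, hj, h1, h2⟩ := this
        have hmem : w j ∈ S j := by
          apply Finset.mem_insert_of_mem
          exact Finset.mem_image.mpr ⟨w, Finset.mem_filter.mpr ⟨hw, hwi, h2, h1⟩, rfl⟩
        have := Finset.min'_le _ _ hmem
        have hlt := hsd j
        simp only [hq, hj, if_false] at hlt
        linarith
      · have hlt := hsd i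
        simp only [hq, if_pos rfl] at hlt
        exact hwi hlt
end

section
/- Let V be a finite non-degenerate antichain in ℝ^d. A generated point p ∈ S_V is characteristic (contained in a flat of every color, equivalently for every coordinate i there exists an i-witness v ∈ D_p) if and only if there are no two minima u, v ∈ D_p with T_p(u) ⊊ T_p(v). -/
open Finset

/-- `p` is a characteristic point of `S_V`: it lies on the surface and for every
coordinate `i` it has an `i`-witness (it is contained in a flat of every color). -/
def CharPoint {d : ℕ} (V : Finset (Fin d → ℝ)) (p : Fin d → ℝ) : Prop :=
  InSurface V p ∧ ∀ i : Fin d, ∃ v ∈ V, v ≤ p ∧ IsWitness V i v p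

/-- `V` is degenerate: some characteristic point exhibits the forbidden pattern of
Lemma 4.2 on three minima below it. -/
def Degenerate {d : ℕ} (V : Finset (Fin d → ℝ)) : Prop :=
  ∃ p : Fin d → ℝ, CharPoint V p ∧
    ∃ x u v, x ∈ V ∧ u ∈ V ∧ v ∈ V ∧ x ≤ p ∧ u ≤ p ∧ v ≤ p ∧
      ∃ i j : Fin d, u i < v i ∧ v i = x i ∧ x i = p i ∧
        v j < u j ∧ u j = x j ∧ x j = p j

/-- For a non-degenerate antichain `V`, a generated point `p ∈ S_V` is
characteristic iff there are no minima `u, v ∈ D_p` with `T_p(u) ⊊ T_p(v)`. -/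
theorem stmt_8 (d : ℕ) (V : Finset (Fin d → ℝ))
    (hV : IsAntichain (· ≤ ·) (V : Set (Fin d → ℝ))) (hnd : ¬ Degenerate V)
    (p : Fin d → ℝ) (hp : InSurface V p)
    (hgen : ∃ G : Finset (Fin d → ℝ), GenSet V p G) :
    CharPoint V p ↔
      ¬ ∃ u v : Fin d → ℝ, u ∈ V ∧ v ∈ V ∧ u ≤ p ∧ v ≤ p ∧ Tight p u ⊂ Tight p v := by
  classical
  constructor
  · rintro hc ⟨u, v, huV, hvV, hup, hvp, hss⟩
    obtain ⟨i, hiv, hiu⟩ := Set.exists_of_ssubset hss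
    obtain ⟨v', hv'V, hv'p, q, hqS, _, hpq, hqi, hqj⟩ := hc.2 i
    have hv'i : v' i = p i := le_antisymm (hv'p i) (le_trans (hpq i) (le_of_eq hqi))
    have hqip : q i = p i := hqi.trans hv'i
    have hnd' : ¬ StrictDom q u := hqS.2 u huV
    simp only [StrictDom, not_forall, not_lt] at hnd'
    obtain ⟨k, hk⟩ := hnd'
    have huk : u k = p k := le_antisymm (hup k) (le_trans (hpq k) hk)
    have hqk : q k = p k := le_antisymm (hk.trans (hup k)) (hpq k)
    have hki : k ≠ i := by
      rintro rfl
      exact hiu (huk.symm : p k = u k)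
    have hv'k : v' k < p k := hqk ▸ hqj k hki
    have hkTu : k ∈ Tight p u := huk.symm
    have hkTv : k ∈ Tight p v := hss.1 hkTu
    exact hnd ⟨p, hc, v, u, v', hvV, huV, hv'V, hvp, hup, hv'p, i, k,
      (lt_of_le_of_ne (hup i) (fun h => hiu h.symm)).trans_eq hv'i.symm,
      hv'i.trans hiv, hiv.symm,
      hv'k.trans_eq huk.symm, huk.trans hkTv, hkTv.symm⟩
  · intro h
    refine ⟨hp, fun i => ?_⟩
    obtain ⟨G, hGV, hGle, hGi⟩ := hgen
    obtain ⟨v, hvG, hvi⟩ := hGi i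
    have hvV : v ∈ V := hGV hvG
    have hvle : v ≤ p := hGle v hvG
    -- choose a small gap ε
    have hε : ∃ ε : ℝ, 0 < ε ∧ ∀ w ∈ V, ∀ k : Fin d, p k < w k → p k + ε ≤ w k := by
      set s : Finset ℝ :=
        ((V ×ˢ (Finset.univ : Finset (Fin d))).image
          (fun z => z.1 z.2 - p z.2)).filter (fun x => 0 < x) with hs
      have hmem : ∀ w ∈ V, ∀ k : Fin d, p k < w k → w k - p k ∈ s := by
        intro w hw k hk
        simp only [hs, Finset.mem_filter, Finset.mem_image, Finset.mem_product]
        exact ⟨⟨(w, k), ⟨hw, Finset.mem_univ k⟩, rfl⟩, by linarith⟩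
      by_cases hne : s.Nonempty
      · refine ⟨s.min' hne, ?_, ?_⟩
        · have := s.min'_mem hne
          simp only [hs, Finset.mem_filter] at this
          exact this.2
        · intro w hw k hk
          have := s.min'_le _ (hmem w hw k hk)
          linarith
      · refine ⟨1, one_pos, fun w hw k hk => absurd ⟨_, hmem w hw k hk⟩ hne⟩
    obtain ⟨ε, hεpos, hεgap⟩ := hε
    set q : Fin d → ℝ := fun k => if p k = v k ∧ k ≠ i then p k + ε else p k with hq
    have hpq : p ≤ q := by
      intro k
      simp only [hq]
      split <;> linarith
    have hqi : q i = p i := by simp [hq]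
    have hqS : InSurface V q := by
      constructor
      · obtain ⟨w0, hw0, hw0p⟩ := hp.1
        exact ⟨w0, hw0, le_trans hw0p hpq⟩
      · intro w hw hsd
        have hnp := hp.2 w hw
        simp only [StrictDom, not_forall, not_lt] at hnp
        obtain ⟨k, hk⟩ := hnp
        -- w k ≥ p k, but w k < q k, so q k = p k + ε and w k = p k
        have hwk : w k = p k := by
          have h1 : w k < q k := hsd k
          simp only [hq] at h1
          split at h1
          · rcases lt_or_eq_of_le hk with h2 | h2
            · exact absurd (hεgap w hw k h2) (by linarith)
            · exact h2.symm
          · linarith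
        -- w ≤ p
        have hwp : w ≤ p := by
          intro m
          have h1 : w m < q m := hsd m
          simp only [hq] at h1
          split at h1
          · by_contra hc
            push_neg at hc
            exact absurd (hεgap w hw m hc) (by linarith)
          · linarith
        -- Tight p w ⊂ Tight p v
        have hsub : Tight p w ⊆ Tight p v := by
          intro m hm
          have hm' : p m = w m := hm
          have h1 : w m < q m := hsd m
          simp only [hq] at h1
          split at h1
          · next hcond => exact hcond.1
          · linarith
        have hiTv : i ∈ Tight p v := (hvi.symm : p i = v i)
        have hiTw : i ∉ Tight p w := by
          intro hc
          have hpi : p i = w i := hc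
          have h1 : w i < q i := hsd i
          rw [hqi] at h1
          linarith
        exact h ⟨w, v, hw, hvV, hwp, hvle,
          (Set.ssubset_iff_of_subset hsub).mpr ⟨i, hiTv, hiTw⟩⟩
    refine ⟨v, hvV, hvle, q, hqS, hvle, hpq, hqi.trans hvi.symm, ?_⟩
    intro j hj
    by_cases hcond : p j = v j
    · have : q j = p j + ε := by simp [hq, hcond, hj]
      rw [this, ← hcond]
      linarith
    · have hvj : v j < p j := lt_of_le_of_ne (hvle j) (fun h => hcond h.symm)
      exact hvj.trans_le (hpq j)
end

section
/- Let V be a finite non-degenerate antichain in ℝ^d and let p ∈ S_V be a characteristic point. Then all minimal generating sets of p have the same cardinality. Moreover, defining an equivalence on D_p by u ∼ v iff T_p(u) = T_p(v), with classes P_1, …, P_{k+1}, a subset G ⊆ D_p is a minimal generating set for p if and only if |G ∩ P_m| = 1 for every m. -/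
open Finset

section Aux

variable {d : ℕ} {V : Finset (Fin d → ℝ)} {p : Fin d → ℝ}

/-- Every element of `D_p` has a nonempty tight set. -/
lemma tight_nonempty (hp : CharPoint V p) {v : Fin d → ℝ} (hv : v ∈ V) (hvp : v ≤ p) :
    ∃ i, p i = v i := by
  have h := hp.1.2 v hv
  rw [StrictDom] at h
  push_neg at h
  obtain ⟨i, hi⟩ := h
  exact ⟨i, le_antisymm hi (hvp i)⟩

/-- Every coordinate is tight for some element of `D_p`. -/
lemma cover (hp : CharPoint V p) (i : Fin d) : ∃ x ∈ V, x ≤ p ∧ p i = x i := by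
  obtain ⟨x, hxV, hxp, q, _, _, hpq, hqi, _⟩ := hp.2 i
  exact ⟨x, hxV, hxp, le_antisymm ((hpq i).trans hqi.le) (hxp i)⟩

/-- The non-degeneracy pattern, packaged. -/
lemma pattern (hnd : ¬ Degenerate V) (hp : CharPoint V p) {x u v : Fin d → ℝ}
    (hx : x ∈ V) (hxp : x ≤ p) (hu : u ∈ V) (hup : u ≤ p) (hv : v ∈ V) (hvp : v ≤ p)
    {i j : Fin d} (h1 : p i ≠ u i) (h2 : p i = v i) (h3 : p i = x i)
    (h4 : p j ≠ v j) (h5 : p j = u j) (h6 : p j = x j) : False := by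
  apply hnd
  refine ⟨p, hp, x, u, v, hx, hu, hv, hxp, hup, hvp, i, j, ?_, h2.symm.trans h3, h3.symm,
    ?_, h5.symm.trans h6, h6.symm⟩
  · have : u i < p i := lt_of_le_of_ne (hup i) (Ne.symm h1)
    exact h2 ▸ this
  · have : v j < p j := lt_of_le_of_ne (hvp j) (Ne.symm h4)
    exact h5 ▸ this

/-- No strict containment among tight sets of elements of `D_p`. -/
lemma tight_eq_of_subset (hnd : ¬ Degenerate V) (hp : CharPoint V p) {u v : Fin d → ℝ}
    (hu : u ∈ V) (hup : u ≤ p) (hv : v ∈ V) (hvp : v ≤ p)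
    (hsub : Tight p u ⊆ Tight p v) : Tight p u = Tight p v := by
  refine Set.Subset.antisymm hsub ?_
  by_contra hns
  obtain ⟨j, hjv, hju⟩ := Set.not_subset.mp hns
  simp only [Tight, Set.mem_setOf_eq] at hjv hju
  obtain ⟨x, hxV, hxp, q, hqS, -, hpq, hqj, hax⟩ := hp.2 j
  have hxj : p j = x j := le_antisymm ((hpq j).trans hqj.le) (hxp j)
  have hnd' := hqS.2 u hu
  rw [StrictDom] at hnd'
  push_neg at hnd'
  obtain ⟨m, hm⟩ := hnd'
  have hum : p m = u m := le_antisymm (le_trans (hpq m) hm) (hup m)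
  have hqm : q m = p m := le_antisymm (hm.trans (hup m)) (hpq m)
  have hmj : m ≠ j := fun h => hju (h ▸ hum)
  have hxm : p m ≠ x m := by
    have := hax m hmj
    rw [hqm] at this
    exact (ne_of_lt this).symm
  have hvm : p m = v m := hsub hum
  exact pattern hnd hp hv hvp hu hup hxV hxp hju hxj hjv hxm hum hvm

/-- Every element of `D_p` has a "private class" coordinate: a tight coordinate such that
any element of `D_p` tight there has the same tight set. -/
lemma exists_private (hnd : ¬ Degenerate V) (hp : CharPoint V p) {a : Fin d → ℝ}
    (ha : a ∈ V) (hap : a ≤ p) :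
    ∃ i, p i = a i ∧ ∀ b ∈ V, b ≤ p → p i = b i → Tight p b = Tight p a := by
  classical
  set D : Finset (Fin d → ℝ) := V.filter (fun b => b ≤ p ∧ Tight p b ≠ Tight p a) with hD
  by_cases hDne : D.Nonempty
  · obtain ⟨b, hbD, hmax⟩ := D.exists_max_image
      (fun b => (Finset.univ.filter (fun i => p i = a i ∧ p i = b i)).card) hDne
    rw [hD, mem_filter] at hbD
    obtain ⟨hbV, hbp, hbne⟩ := hbD
    have hnsub : ¬ Tight p a ⊆ Tight p b := fun hs =>
      hbne (tight_eq_of_subset hnd hp ha hap hbV hbp hs).symm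
    obtain ⟨e, hea, heb⟩ := Set.not_subset.mp hnsub
    simp only [Tight, Set.mem_setOf_eq] at hea heb
    refine ⟨e, hea, ?_⟩
    intro c hcV hcp hce
    by_contra hcne
    -- step 2 : T(a) ∩ T(b) ⊆ T(c)
    have step2 : ∀ g, p g = a g → p g = b g → p g = c g := by
      intro g hga hgb
      by_contra hgc
      exact pattern hnd hp ha hap hbV hbp hcV hcp heb hce hea hgc hgb hga
    have hcD : c ∈ D := by
      rw [hD, mem_filter]; exact ⟨hcV, hcp, hcne⟩
    have hle := hmax c hcD
    have hlt : (Finset.univ.filter (fun i => p i = a i ∧ p i = b i)).card <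
        (Finset.univ.filter (fun i => p i = a i ∧ p i = c i)).card := by
      apply Finset.card_lt_card
      rw [Finset.ssubset_iff_of_subset]
      · refine ⟨e, ?_, ?_⟩
        · simp only [mem_filter, mem_univ, true_and]; exact ⟨hea, hce⟩
        · simp only [mem_filter, mem_univ, true_and, not_and]; exact fun _ => heb
      · intro i hi
        simp only [mem_filter, mem_univ, true_and] at hi ⊢
        exact ⟨hi.1, step2 i hi.1 hi.2⟩
    exact absurd hle (not_le.mpr hlt)
  · obtain ⟨i, hia⟩ := tight_nonempty hp ha hap
    refine ⟨i, hia, fun b hbV hbp _ => ?_⟩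
    by_contra hne
    exact hDne ⟨b, by rw [hD, mem_filter]; exact ⟨hbV, hbp, hne⟩⟩

/-- The characterization of minimal generating sets as transversals. -/
lemma mingen_iff (hnd : ¬ Degenerate V) (hp : CharPoint V p) {G : Finset (Fin d → ℝ)}
    (hGV : G ⊆ V) (hGp : ∀ v ∈ G, v ≤ p) :
    MinGen V p G ↔ ∀ v ∈ V, v ≤ p → ∃! w, w ∈ G ∧ Tight p w = Tight p v := by
  constructor
  · rintro ⟨⟨-, -, hgen⟩, hmin⟩ v hv hvp
    obtain ⟨i, hia, hgood⟩ := exists_private hnd hp hv hvp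
    obtain ⟨w, hwG, hwi⟩ := hgen i
    have hwT : Tight p w = Tight p v := hgood w (hGV hwG) (hGp w hwG) hwi.symm
    refine ⟨w, ⟨hwG, hwT⟩, ?_⟩
    rintro w' ⟨hw'G, hw'T⟩
    by_contra hne
    apply hmin w' hw'G
    refine ⟨(erase_subset _ _).trans hGV, fun z hz => hGp z (mem_of_mem_erase hz), fun k => ?_⟩
    obtain ⟨z, hzG, hzk⟩ := hgen k
    by_cases hzw : z = w'
    · have hk : p k = w k := by
        have h1 : k ∈ Tight p w' := by
          rw [hzw] at hzk
          exact hzk.symm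
        rw [hw'T, ← hwT] at h1
        exact h1
      exact ⟨w, mem_erase.mpr ⟨fun h => hne h.symm, hwG⟩, hk.symm⟩
    · exact ⟨z, mem_erase.mpr ⟨hzw, hzG⟩, hzk⟩
  · intro h
    have hgen : GenSet V p G := by
      refine ⟨hGV, hGp, fun i => ?_⟩
      obtain ⟨x, hxV, hxp, hxi⟩ := cover hp i
      obtain ⟨w, ⟨hwG, hwT⟩, -⟩ := h x hxV hxp
      have : p i = w i := by
        have h1 : i ∈ Tight p x := hxi
        rw [← hwT] at h1
        exact h1
      exact ⟨w, hwG, this.symm⟩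
    refine ⟨hgen, fun w₀ hw₀ hGen' => ?_⟩
    obtain ⟨i, _, hgood⟩ := exists_private hnd hp (hGV hw₀) (hGp w₀ hw₀)
    obtain ⟨w, hwE, hwi⟩ := hGen'.2.2 i
    have hwG := mem_of_mem_erase hwE
    have hT : Tight p w = Tight p w₀ := hgood w (hGV hwG) (hGp w hwG) hwi.symm
    have := (h w₀ (hGV hw₀) (hGp w₀ hw₀)).unique ⟨hwG, hT⟩ ⟨hw₀, rfl⟩
    exact (mem_erase.mp hwE).1 this

lemma mingen_card (hnd : ¬ Degenerate V) (hp : CharPoint V p) {G₁ G₂ : Finset (Fin d → ℝ)}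
    (hmin₁ : MinGen V p G₁) (hmin₂ : MinGen V p G₂) : G₁.card = G₂.card := by
  classical
  have key : ∀ G : Finset (Fin d → ℝ), MinGen V p G →
      G.card = ((V.filter (fun v => v ≤ p)).image (Tight p)).card := by
    intro G hmin
    have hGV := hmin.1.1
    have hGp := hmin.1.2.1
    have h := (mingen_iff hnd hp hGV hGp).mp hmin
    have himg : G.image (Tight p) = (V.filter (fun v => v ≤ p)).image (Tight p) := by
      ext S
      simp only [mem_image, mem_filter]
      constructor
      · rintro ⟨w, hwG, rfl⟩
        exact ⟨w, ⟨hGV hwG, hGp w hwG⟩, rfl⟩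
      · rintro ⟨v, ⟨hvV, hvp⟩, rfl⟩
        obtain ⟨w, ⟨hwG, hwT⟩, -⟩ := h v hvV hvp
        exact ⟨w, hwG, hwT⟩
    rw [← himg]
    refine (Finset.card_image_of_injOn ?_).symm
    intro w₁ hw₁ w₂ hw₂ heq
    exact (h w₂ (hGV hw₂) (hGp w₂ hw₂)).unique ⟨hw₁, heq⟩ ⟨hw₂, rfl⟩
  exact (key G₁ hmin₁).trans (key G₂ hmin₂).symm

end Aux

/-- For a non-degenerate `V` and a characteristic point `p ∈ S_V`:
all minimal generating sets of `p` have the same cardinality, and `G ⊆ D_p` is a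
minimal generating set iff it meets each class of the equivalence
`u ∼ v ↔ T_p(u) = T_p(v)` on `D_p` in exactly one element. -/
theorem stmt_9 (d : ℕ) (V : Finset (Fin d → ℝ))
    (hV : IsAntichain (· ≤ ·) (V : Set (Fin d → ℝ))) (hnd : ¬ Degenerate V)
    (p : Fin d → ℝ) (hp : CharPoint V p) :
    (∀ G₁ G₂ : Finset (Fin d → ℝ), MinGen V p G₁ → MinGen V p G₂ → G₁.card = G₂.card) ∧
      ∀ G : Finset (Fin d → ℝ), G ⊆ V → (∀ v ∈ G, v ≤ p) →
        (MinGen V p G ↔ ∀ v ∈ V, v ≤ p → ∃! w, w ∈ G ∧ Tight p w = Tight p v) := by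
  refine ⟨fun G₁ G₂ h₁ h₂ => mingen_card hnd hp h₁ h₂,
    fun G hGV hGp => mingen_iff hnd hp hGV hGp⟩
end

section
/- Let V be a finite non-degenerate antichain in ℝ^d and p ∈ S_V a characteristic point. Then every minimum v ∈ D_p is contained in some minimal generating set of p. -/
open Finset

/-- Any element below the surface has a tight coordinate. -/
lemma tight_exists' {d : ℕ} {p v : Fin d → ℝ} (hvp : v ≤ p) (h : ¬ StrictDom p v) :
    ∃ i, v i = p i := by
  simp only [StrictDom, not_forall, not_lt] at h
  obtain ⟨i, hi⟩ := h
  exact ⟨i, le_antisymm (hvp i) hi⟩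

/-- A generating set containing an essential element can be shrunk to a minimal one. -/
lemma shrink_to_minimal {d : ℕ} (V : Finset (Fin d → ℝ)) (p : Fin d → ℝ) (i : Fin d)
    (v : Fin d → ℝ) :
    ∀ G : Finset (Fin d → ℝ), GenSet V p G → v ∈ G → v i = p i →
      (∀ u ∈ G, u ≠ v → u i ≠ p i) →
      ∃ G', G' ⊆ G ∧ MinGen V p G' ∧ v ∈ G' := by
  intro G
  induction G using Finset.strongInduction with
  | _ G ih =>
    intro hG hvG hvi hess
    by_cases h : ∀ u ∈ G, ¬ GenSet V p (G.erase u)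
    · exact ⟨G, subset_rfl, ⟨hG, h⟩, hvG⟩
    · push_neg at h
      obtain ⟨u, huG, hgen⟩ := h
      have huv : u ≠ v := by
        rintro rfl
        obtain ⟨w, hw, hwi⟩ := hgen.2.2 i
        exact hess w (Finset.mem_of_mem_erase hw) (Finset.ne_of_mem_erase hw) hwi
      obtain ⟨G', hsub, hmin, hvG'⟩ := ih (G.erase u) (Finset.erase_ssubset huG) hgen
        (Finset.mem_erase.mpr ⟨Ne.symm huv, hvG⟩) hvi
        (fun w hw hwv => hess w (Finset.mem_of_mem_erase hw) hwv)
      exact ⟨G', hsub.trans (Finset.erase_subset _ _), hmin, hvG'⟩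

/-- From the witness at a coordinate `j` not tight for `v`, extract a minimum tight at `j`
that misses some tight coordinate of `v`. -/
lemma witness_extract {d : ℕ} {V : Finset (Fin d → ℝ)} {p v : Fin d → ℝ}
    (hp : CharPoint V p) (hv : v ∈ V) (hvp : v ≤ p) {j : Fin d} (hj : p j ≠ v j) :
    ∃ w ∈ V, w ≤ p ∧ w j = p j ∧ ∃ k, v k = p k ∧ w k < p k := by
  obtain ⟨w, hwV, hwp, q, hqS, -, hpq, hqj, hqs⟩ := hp.2 j
  have hwj : w j = p j := le_antisymm (hwp j) (hqj ▸ hpq j)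
  have hqv : ¬ StrictDom q v := hqS.2 v hv
  simp only [StrictDom, not_forall, not_lt] at hqv
  obtain ⟨k, hk⟩ := hqv
  have hvk : v k = p k := le_antisymm (hvp k) (le_trans (hpq k) hk)
  have hqk : q k = p k := le_antisymm (le_trans hk (hvp k)) (hpq k)
  have hkj : k ≠ j := fun h => hj (h ▸ hvk).symm
  exact ⟨w, hwV, hwp, hwj, k, hvk, hqk ▸ hqs k hkj⟩

/-- The key combinatorial lemma: there is a tight coordinate `i` of `v` such that every
non-tight coordinate `j` is covered by some minimum avoiding `i`. -/
lemma key_coord {d : ℕ} {V : Finset (Fin d → ℝ)} {p v : Fin d → ℝ}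
    (hnd : ¬ Degenerate V) (hp : CharPoint V p) (hv : v ∈ V) (hvp : v ≤ p) :
    ∃ i, v i = p i ∧ ∀ j, p j ≠ v j → ∃ u ∈ V, u ≤ p ∧ u j = p j ∧ u i < p i := by
  by_contra hcon
  push_neg at hcon
  set R : Fin d → Fin d → Prop := fun i k =>
    v i = p i ∧ v k = p k ∧ ∃ w ∈ V, w ≤ p ∧ w i = p i ∧ w k < p k with hR
  have htot : ∀ i, v i = p i → ∃ k, R i k := by
    intro i hi
    obtain ⟨j, hj, hall⟩ := hcon i hi
    obtain ⟨w, hwV, hwp, hwj, k, hvk, hwk⟩ := witness_extract hp hv hvp hj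
    have hwi : w i = p i := le_antisymm (hwp i) (hall w hwV hwp hwj)
    exact ⟨k, hi, hvk, w, hwV, hwp, hwi, hwk⟩
  have hasym : ∀ i k, R i k → R k i → False := by
    intro i k h1 h2
    obtain ⟨hvi, hvk, w, hwV, hwp, hwi, hwk⟩ := h1
    obtain ⟨-, -, w', hw'V, hw'p, hw'k, hw'i⟩ := h2
    exact hnd ⟨p, hp, v, w, w', hv, hwV, hw'V, hvp, hwp, hw'p, k, i,
      hw'k ▸ hwk, hw'k.trans hvk.symm, hvk, hwi ▸ hw'i, hwi.trans hvi.symm, hvi⟩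
  have hirr : ∀ i, R i i → False := by
    intro i hRi
    obtain ⟨-, -, w, -, -, hwi, hwi'⟩ := hRi
    exact absurd hwi (ne_of_lt hwi')
  have htrans : ∀ i k l, R i k → R k l → R i l := by
    intro i k l h1 h2
    obtain ⟨hvi, hvk, w, hwV, hwp, hwi, hwk⟩ := h1
    obtain ⟨-, hvl, w', hw'V, hw'p, hw'k, hw'l⟩ := h2
    by_cases h : w' i = p i
    · exact ⟨hvi, hvl, w', hw'V, hw'p, h, hw'l⟩
    · exfalso
      have hki : R k i := ⟨hvk, hvi, w', hw'V, hw'p, hw'k, lt_of_le_of_ne (hw'p i) h⟩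
      exact hasym i k ⟨hvi, hvk, w, hwV, hwp, hwi, hwk⟩ hki
  obtain ⟨i₀, hi₀⟩ := tight_exists' hvp (hp.1.2 v hv)
  let f : ℕ → {i : Fin d // v i = p i} := fun n =>
    Nat.rec ⟨i₀, hi₀⟩ (fun _ x => ⟨(htot x.1 x.2).choose, (htot x.1 x.2).choose_spec.2.1⟩) n
  have hstep : ∀ n, R (f n).1 (f (n + 1)).1 := fun n => (htot (f n).1 (f n).2).choose_spec
  have hchain : ∀ n m, m < n → R (f m).1 (f n).1 := by
    intro n
    induction n with
    | zero => intro m hm; exact absurd hm (Nat.not_lt_zero m)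
    | succ n ih =>
      intro m hm
      rcases Nat.lt_succ_iff_lt_or_eq.mp hm with h | rfl
      · exact htrans _ _ _ (ih m h) (hstep n)
      · exact hstep m
  obtain ⟨a, b, hab, heq⟩ := Finite.exists_ne_map_eq_of_infinite f
  rcases hab.lt_or_gt with h | h
  · exact hirr _ (heq ▸ hchain b a h)
  · exact hirr _ (heq ▸ hchain a b h)

/-- For a non-degenerate `V` and a characteristic point `p ∈ S_V`,
every minimum `v ∈ D_p` lies in some minimal generating set of `p`. -/
theorem stmt_10 (d : ℕ) (V : Finset (Fin d → ℝ))
    (hV : IsAntichain (· ≤ ·) (V : Set (Fin d → ℝ))) (hnd : ¬ Degenerate V)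
    (p : Fin d → ℝ) (hp : CharPoint V p)
    (v : Fin d → ℝ) (hv : v ∈ V) (hvp : v ≤ p) :
    ∃ G : Finset (Fin d → ℝ), MinGen V p G ∧ v ∈ G := by
  classical
  obtain ⟨i, hvi, hcov⟩ := key_coord hnd hp hv hvp
  have hU : ∀ j : Fin d, ∃ u, u ∈ V ∧ u ≤ p ∧ u j = p j ∧
      (p j = v j → u = v) ∧ (p j ≠ v j → u i < p i) := by
    intro j
    by_cases h : p j = v j
    · exact ⟨v, hv, hvp, h.symm, fun _ => rfl, fun h' => absurd h h'⟩
    · obtain ⟨u, huV, hup, huj, hui⟩ := hcov j h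
      exact ⟨u, huV, hup, huj, fun h' => absurd h' h, fun _ => hui⟩
  choose U hUV hUp hUj hUv hUi using hU
  set G : Finset (Fin d → ℝ) := Finset.image U Finset.univ with hG
  have hvG : v ∈ G := Finset.mem_image.mpr ⟨i, Finset.mem_univ _, hUv i hvi.symm⟩
  have hGgen : GenSet V p G := by
    refine ⟨?_, ?_, ?_⟩
    · intro u hu; obtain ⟨j, -, rfl⟩ := Finset.mem_image.mp hu; exact hUV j
    · intro u hu; obtain ⟨j, -, rfl⟩ := Finset.mem_image.mp hu; exact hUp j
    · intro j; exact ⟨U j, Finset.mem_image.mpr ⟨j, Finset.mem_univ _, rfl⟩, hUj j⟩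
  have hess : ∀ u ∈ G, u ≠ v → u i ≠ p i := by
    intro u hu huv
    obtain ⟨j, -, rfl⟩ := Finset.mem_image.mp hu
    by_cases h : p j = v j
    · exact absurd (hUv j h) huv
    · exact ne_of_lt (hUi j h)
  obtain ⟨G', -, hmin, hvG'⟩ := shrink_to_minimal V p i v G hGgen hvG hvi hess
  exact ⟨G', hmin, hvG'⟩
end

section
/- Let V ⊂ ℝ^d be a finite generic suspended antichain and p ∈ S_V a characteristic point with D_p = {v_1, …, v_k}. For every choice of coordinates i_1 ∈ T_p(v_1), …, i_k ∈ T_p(v_k) with i_1, …, i_k pairwise distinct and p_{i_j} > 0 for all j, there exists a maximum M of S_V with M ≥ p and M_{i_j} = p_{i_j} for all j = 1, …, k. -/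
open Finset

/-- `M` is a maximum of the surface: it lies on `S_V` and no positive perturbation in
any single coordinate stays on `S_V`. -/
def IsMaxPoint {d : ℕ} (V : Finset (Fin d → ℝ)) (M : Fin d → ℝ) : Prop :=
  InSurface V M ∧ ∀ j : Fin d, ∀ ε : ℝ, 0 < ε →
    ¬ InSurface V (fun k => M k + if k = j then ε else 0)

/-- Finish a single coordinate: raise `q` at `j` to the least blocking value. -/
lemma finishCoord {d : ℕ} {V : Finset (Fin d → ℝ)} (hsusp : Suspended V)
    (j : Fin d) (q : Fin d → ℝ) (hq : InSurface V q) (hpos : ∀ m, 0 < q m) :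
    ∃ q', q ≤ q' ∧ (∀ m, m ≠ j → q' m = q m) ∧ InSurface V q' ∧
      ∃ w ∈ V, w j = q' j ∧ ∀ m, m ≠ j → w m < q' m := by
  classical
  obtain ⟨H, hH0, hHV, _⟩ := hsusp.2 j
  set B : Finset (Fin d → ℝ) := V.filter (fun w => ∀ m, m ≠ j → w m < q m) with hB
  have hsB : (fun m => if m = j then H else 0) ∈ B := by
    simp only [hB, mem_filter]
    refine ⟨hHV, fun m hm => ?_⟩
    simpa [hm] using hpos m
  obtain ⟨w, hwB, hwmin⟩ := B.exists_min_image (fun w => w j) ⟨_, hsB⟩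
  have hwV : w ∈ V := (mem_filter.mp hwB).1
  have hwlt : ∀ m, m ≠ j → w m < q m := (mem_filter.mp hwB).2
  have hwj : q j ≤ w j := by
    by_contra h
    push_neg at h
    refine hq.2 w hwV (fun m => ?_)
    by_cases hm : m = j
    · subst hm; exact h
    · exact hwlt m hm
  refine ⟨Function.update q j (w j), ?_, ?_, ⟨?_, ?_⟩, w, hwV, ?_, ?_⟩
  · intro m
    by_cases hm : m = j
    · subst hm; simpa using hwj
    · simp [Function.update_of_ne hm]
  · intro m hm; simp [Function.update_of_ne hm]
  · obtain ⟨v, hvV, hvq⟩ := hq.1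
    refine ⟨v, hvV, fun m => le_trans (hvq m) ?_⟩
    by_cases hm : m = j
    · subst hm; simpa using hwj
    · simp [Function.update_of_ne hm]
  · intro u huV hS
    by_cases hu : ∀ m, m ≠ j → u m < q m
    · have h2 : u ∈ B := by simp only [hB, mem_filter]; exact ⟨huV, hu⟩
      have h3 := hwmin u h2
      have h4 := hS j
      rw [Function.update_self] at h4
      linarith
    · push_neg at hu
      obtain ⟨m, hm, hmq⟩ := hu
      have := hS m
      rw [Function.update_of_ne hm] at this
      linarith
  · simp
  · intro m hm
    rw [Function.update_of_ne hm]
    exact hwlt m hm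

/-- Finish every coordinate in a finset `U`. -/
lemma growSet {d : ℕ} {V : Finset (Fin d → ℝ)} (hsusp : Suspended V)
    (U : Finset (Fin d)) :
    ∀ q : Fin d → ℝ, InSurface V q → (∀ m, 0 < q m) →
    ∃ M, q ≤ M ∧ (∀ m, m ∉ U → M m = q m) ∧ InSurface V M ∧
      ∀ j ∈ U, ∃ w ∈ V, w j = M j ∧ ∀ m, m ≠ j → w m < M m := by
  classical
  induction U using Finset.induction_on with
  | empty =>
    intro q hq hpos
    exact ⟨q, le_refl q, fun m _ => rfl, hq, by simp⟩
  | @insert j U hjU ih =>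
    intro q hq hpos
    obtain ⟨q', hqq', hfix, hq'S, w, hwV, hwj, hwlt⟩ := finishCoord hsusp j q hq hpos
    obtain ⟨M, hq'M, hMfix, hMS, hMwit⟩ :=
      ih q' hq'S (fun m => lt_of_lt_of_le (hpos m) (hqq' m))
    refine ⟨M, le_trans hqq' hq'M, ?_, hMS, ?_⟩
    · intro m hm
      have hmj : m ≠ j := fun h => hm (h ▸ Finset.mem_insert_self j U)
      have hmU : m ∉ U := fun h => hm (Finset.mem_insert_of_mem h)
      rw [hMfix m hmU, hfix m hmj]
    · intro j' hj'
      rcases Finset.mem_insert.mp hj' with h | h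
      · subst h
        refine ⟨w, hwV, ?_, fun m hm => lt_of_lt_of_le (hwlt m hm) (hq'M m)⟩
        rw [hwj, hMfix j' hjU]
      · exact hMwit j' h

/-- Raise all zero coordinates of a characteristic point to a common positive value. -/
lemma positify {d : ℕ} {V : Finset (Fin d → ℝ)} (hsusp : Suspended V)
    {p : Fin d → ℝ} (hp : CharPoint V p) (hpnn : ∀ m, 0 ≤ p m)
    (i0 : Fin d) (hi0 : 0 < p i0) :
    ∃ q, p ≤ q ∧ (∀ m, 0 < p m → q m = p m) ∧ InSurface V q ∧ ∀ m, 0 < q m := by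
  classical
  by_cases hz : ∀ m, 0 < p m
  · exact ⟨p, le_refl p, fun m _ => rfl, hp.1, hz⟩
  push_neg at hz
  obtain ⟨m0, hm0⟩ := hz
  have hm00 : p m0 = 0 := le_antisymm hm0 (hpnn m0)
  set Z : Finset (Fin d) := univ.filter (fun m => p m = 0) with hZdef
  have hZ : Z.Nonempty := ⟨m0, by simp [hZdef, hm00]⟩
  set W : Finset (Fin d → ℝ) := V.filter (fun w => ∀ m, 0 < p m → w m < p m) with hWdef
  have hWne : W.Nonempty := by
    obtain ⟨H, hH0, hHV, _⟩ := hsusp.2 m0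
    refine ⟨(fun j => if j = m0 then H else 0), ?_⟩
    simp only [hWdef, mem_filter]
    refine ⟨hHV, fun m hm => ?_⟩
    have hmm0 : m ≠ m0 := fun h => by rw [h, hm00] at hm; exact lt_irrefl 0 hm
    simpa [hmm0] using hm
  obtain ⟨w₁, hw₁W, hw₁min⟩ := W.exists_min_image (fun w => Z.sup' hZ w) hWne
  set t0 : ℝ := Z.sup' hZ w₁ with ht0
  -- every w ∈ W has some positive coordinate on Z
  have hposall : ∀ w ∈ W, 0 < Z.sup' hZ w := by
    intro w hwW
    by_contra h
    push_neg at h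
    have hzero : ∀ m ∈ Z, w m = 0 := by
      intro m hm
      have h1 : w m ≤ Z.sup' hZ w := Finset.le_sup' _ hm
      have h2 : 0 ≤ w m := hsusp.1 w (mem_filter.mp hwW).1 m
      linarith
    obtain ⟨u, huV, hup, qt, hqtS, _, hpqt, hASj, hASlt⟩ := hp.2 i0
    have := hqtS.2 w (mem_filter.mp hwW).1
    rw [StrictDom] at this
    push_neg at this
    obtain ⟨l, hl⟩ := this
    by_cases hlp : 0 < p l
    · have h1 : w l < p l := (mem_filter.mp hwW).2 l hlp
      have h2 : p l ≤ qt l := hpqt l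
      linarith
    · have hl0 : p l = 0 := le_antisymm (not_lt.mp hlp) (hpnn l)
      have hlZ : l ∈ Z := by simp [hZdef, hl0]
      have hw0 : w l = 0 := hzero l hlZ
      have hqt0 : qt l ≤ 0 := hw0 ▸ hl
      have hli0 : l ≠ i0 := fun h => by rw [h] at hl0; linarith
      have h3 : u l < qt l := hASlt l hli0
      have h4 : 0 ≤ u l := hsusp.1 u huV l
      linarith
  have ht0pos : 0 < t0 := hposall w₁ hw₁W
  refine ⟨fun m => if 0 < p m then p m else t0, ?_, ?_, ⟨?_, ?_⟩, ?_⟩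
  · intro m
    by_cases hm : 0 < p m
    · simp [hm]
    · have : p m = 0 := le_antisymm (not_lt.mp hm) (hpnn m)
      simp [hm, this, le_of_lt ht0pos]
  · intro m hm; simp [hm]
  · obtain ⟨v, hvV, hvp⟩ := hp.1.1
    refine ⟨v, hvV, fun m => le_trans (hvp m) ?_⟩
    by_cases hm : 0 < p m
    · simp [hm]
    · have : p m = 0 := le_antisymm (not_lt.mp hm) (hpnn m)
      simp [hm, this, le_of_lt ht0pos]
  · intro u huV hS
    by_cases hu : ∀ m, 0 < p m → u m < p m
    · have huW : u ∈ W := by simp only [hWdef, mem_filter]; exact ⟨huV, hu⟩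
      have h1 : t0 ≤ Z.sup' hZ u := hw₁min u huW
      obtain ⟨m, hmZ, hmeq⟩ := Finset.exists_mem_eq_sup' hZ u
      have hm0' : p m = 0 := (mem_filter.mp hmZ).2
      have hmnot : ¬ 0 < p m := by rw [hm0']; exact lt_irrefl 0
      have := hS m
      simp only [hmnot, if_false] at this
      rw [hmeq] at h1
      linarith
    · push_neg at hu
      obtain ⟨m, hm, hmq⟩ := hu
      have := hS m
      simp only [hm, if_true] at this
      linarith
  · intro m
    by_cases hm : 0 < p m
    · simp [hm]
    · simpa [hm] using ht0pos

/-- Realization criterion. Let `V` be a generic suspended antichain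
(distinct vertices share a coordinate only at value `0`) and `p ∈ S_V` a
characteristic point. For every choice of pairwise distinct tight coordinates, one
for each minimum in `D_p`, all positive at `p`, there is a maximum `M ≥ p` of `S_V`
agreeing with `p` in all the chosen coordinates. -/
theorem stmt_15 (d : ℕ) (V : Finset (Fin d → ℝ))
    (hV : IsAntichain (· ≤ ·) (V : Set (Fin d → ℝ)))
    (hgen : ∀ u ∈ V, ∀ v ∈ V, u ≠ v → ∀ i, u i = v i → u i = 0)
    (hsusp : Suspended V)
    (p : Fin d → ℝ) (hp : CharPoint V p)
    (choice : (Fin d → ℝ) → Fin d)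
    (htight : ∀ v ∈ V, v ≤ p → p (choice v) = v (choice v))
    (hdistinct : ∀ u ∈ V, ∀ v ∈ V, u ≤ p → v ≤ p → u ≠ v → choice u ≠ choice v)
    (hpos : ∀ v ∈ V, v ≤ p → 0 < p (choice v)) :
    ∃ M : Fin d → ℝ, IsMaxPoint V M ∧ p ≤ M ∧
      ∀ v ∈ V, v ≤ p → M (choice v) = p (choice v) := by
  classical
  obtain ⟨v0, hv0V, hv0p⟩ := hp.1.1
  have hpnn : ∀ m, 0 ≤ p m := fun m => le_trans (hsusp.1 v0 hv0V m) (hv0p m)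
  have hi0 : 0 < p (choice v0) := hpos v0 hv0V hv0p
  obtain ⟨q1, hpq1, hq1fix, hq1S, hq1pos⟩ := positify hsusp hp hpnn (choice v0) hi0
  set U : Finset (Fin d) :=
    univ.filter (fun j => ¬ ∃ v ∈ V, v ≤ p ∧ choice v = j) with hUdef
  obtain ⟨M, hq1M, hMfix, hMS, hMwit⟩ := growSet hsusp U q1 hq1S hq1pos
  have hpM : p ≤ M := le_trans hpq1 hq1M
  have hMpos : ∀ m, 0 < M m := fun m => lt_of_lt_of_le (hq1pos m) (hq1M m)
  have hchosenNotU : ∀ v ∈ V, v ≤ p → choice v ∉ U := by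
    intro v hv hvp h
    have := (mem_filter.mp h).2
    exact this ⟨v, hv, hvp, rfl⟩
  have hfix : ∀ v ∈ V, v ≤ p → M (choice v) = p (choice v) := by
    intro v hv hvp
    rw [hMfix _ (hchosenNotU v hv hvp), hq1fix _ (hpos v hv hvp)]
  -- key strictness: chosen vertices are strictly below M off their chosen coordinate
  have hkey : ∀ v ∈ V, v ≤ p → ∀ m, m ≠ choice v → v m < M m := by
    intro v hv hvp m hm
    by_cases hmU : m ∈ U
    · obtain ⟨w, hwV, hwm, hwlt⟩ := hMwit m hmU
      rcases lt_or_eq_of_le (le_trans (hvp m) (hpM m)) with h | h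
      · exact h
      · exfalso
        have hvw : v ≠ w := by
          intro he
          have h1 : v (choice v) = M (choice v) := by
            rw [hfix v hv hvp]
            exact (htight v hv hvp).symm
          have h2 : w (choice v) < M (choice v) := hwlt (choice v) (Ne.symm hm)
          rw [← he] at h2
          linarith
        have h0 := hgen v hv w hwV hvw m (h.trans hwm.symm)
        have := hMpos m
        rw [← h] at this
        linarith
    · have hex : ∃ u ∈ V, u ≤ p ∧ choice u = m := by
        have := mem_filter.not.mp hmU
        push_neg at this
        simpa [hUdef] using this
      obtain ⟨u, huV, hup, hum⟩ := hex
      have hpm : p m = u m := by rw [← hum]; exact htight u huV hup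
      have hvu : v ≠ u := fun he => hm (by rw [he, hum])
      rcases lt_or_eq_of_le (hvp m) with h | h
      · exact lt_of_lt_of_le h (hpM m)
      · exfalso
        have h0 := hgen v hv u huV hvu m (h.trans hpm)
        have hpm0 : 0 < p m := by rw [← hum]; exact hpos u huV hup
        rw [h0] at h
        linarith
  -- witness in every coordinate
  have hwitAll : ∀ j, ∃ w ∈ V, w j = M j ∧ ∀ m, m ≠ j → w m < M m := by
    intro j
    by_cases hjU : j ∈ U
    · exact hMwit j hjU
    · have hex : ∃ v ∈ V, v ≤ p ∧ choice v = j := by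
        have := mem_filter.not.mp hjU
        push_neg at this
        simpa [hUdef] using this
      obtain ⟨v, hvV, hvp, hcv⟩ := hex
      refine ⟨v, hvV, ?_, ?_⟩
      · rw [← hcv, ← htight v hvV hvp, hfix v hvV hvp]
      · intro m hm
        exact hkey v hvV hvp m (by rw [hcv]; exact hm)
  refine ⟨M, ⟨hMS, ?_⟩, hpM, hfix⟩
  intro j ε hε hIn
  obtain ⟨w, hwV, hwj, hwlt⟩ := hwitAll j
  refine hIn.2 w hwV (fun m => ?_)
  by_cases hm : m = j
  · subst hm; rw [hwj]; simp [hε]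
  · simp only [if_neg hm, add_zero]; exact hwlt m hm
end

section
/- In a generic suspended orthogonal surface in ℝ^4 whose cp-lattice is the face lattice of a simplicial 4-polytope minus a facet, every symmetric edge (an edge {u,v} whose join u ∨ v takes exactly two coordinates from each of u and v, and p = u∨v has all coordinates positive) is contained in at least four facets. -/
open Finset

open scoped Classical

lemma isClosed_surface {d : ℕ} (V : Finset (Fin d → ℝ)) :
    IsClosed {r : Fin d → ℝ | InSurface V r} := by
  have heq : {r : Fin d → ℝ | InSurface V r} =
      (⋃ w ∈ (V : Set (Fin d → ℝ)), ⋂ k : Fin d, {r | w k ≤ r k}) ∩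
      (⋂ w ∈ (V : Set (Fin d → ℝ)), ⋃ k : Fin d, {r | r k ≤ w k}) := by
    ext r
    simp only [InSurface, StrictDom, Set.mem_inter_iff, Set.mem_setOf_eq,
      Set.mem_iUnion, Set.mem_iInter, Finset.mem_coe, not_forall, not_lt, Pi.le_def]
    tauto
  rw [heq]
  refine IsClosed.inter ?_ ?_
  · exact Set.Finite.isClosed_biUnion V.finite_toSet fun w _ =>
      isClosed_iInter fun k => isClosed_le continuous_const (continuous_apply k)
  · exact isClosed_biInter fun w _ =>
      isClosed_iUnion_of_finite fun k => isClosed_le (continuous_apply k) continuous_const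

lemma exists_blocker {d : ℕ} (V : Finset (Fin d → ℝ)) (M : Fin d → ℝ) (j : Fin d)
    (hM : InSurface V M)
    (h : ∀ ε : ℝ, 0 < ε → ¬ InSurface V (fun k => M k + if k = j then ε else 0)) :
    ∃ w ∈ V, w j = M j ∧ ∀ l, l ≠ j → w l < M l := by
  by_contra hc
  push_neg at hc
  have key : ∀ w ∈ V, M j < w j ∨ ∃ l, l ≠ j ∧ M l ≤ w l := by
    intro w hw
    have h2 := hM.2 w hw
    simp only [StrictDom, not_forall, not_lt] at h2
    obtain ⟨l, hl⟩ := h2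
    by_cases hlj : l = j
    · subst hlj
      rcases lt_or_eq_of_le hl with h1 | h1
      · exact Or.inl h1
      · exact Or.inr (hc w hw h1.symm)
    · exact Or.inr ⟨l, hlj, hl⟩
  set F := V.filter (fun w => M j < w j) with hF
  set ε : ℝ := if hne : F.Nonempty then F.inf' hne (fun w => w j - M j) else 1 with hε'
  have hε : 0 < ε := by
    by_cases hne : F.Nonempty
    · rw [hε', dif_pos hne]
      rw [Finset.lt_inf'_iff]
      intro w hw
      have := (Finset.mem_filter.mp hw).2
      linarith
    · rw [hε', dif_neg hne]; norm_num
  apply h ε hε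
  constructor
  · obtain ⟨v0, hv0, hv0le⟩ := hM.1
    refine ⟨v0, hv0, fun k => ?_⟩
    have := hv0le k
    dsimp only
    split <;> linarith
  · intro w hw hsd
    rcases key w hw with hcase | ⟨l, hlj, hl⟩
    · have hwF : w ∈ F := Finset.mem_filter.mpr ⟨hw, hcase⟩
      have hle : ε ≤ w j - M j := by
        rw [hε', dif_pos ⟨w, hwF⟩]
        exact Finset.inf'_le _ hwF
      have := hsd j
      simp only [eq_self_iff_true, if_true] at this
      linarith
    · have := hsd l
      simp only [if_neg hlj] at this
      linarith

lemma construct (V : Finset (Fin 4 → ℝ))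
    (hgen : ∀ u ∈ V, ∀ v ∈ V, u ≠ v → ∀ i, u i = v i → u i = 0)
    (hsusp : Suspended V)
    (u v : Fin 4 → ℝ) (hu : u ∈ V) (hv : v ∈ V) (huv : u ≠ v)
    (hedge : InSurface V (u ⊔ v))
    (hpos : ∀ i, 0 < (u ⊔ v) i)
    (i j : Fin 4)
    (hpi : (u ⊔ v) i = u i) (hpj : (u ⊔ v) j = v j) :
    ∃ M : Fin 4 → ℝ, IsMaxPoint V M ∧ u ⊔ v ≤ M ∧
      M i = (u ⊔ v) i ∧ M j = (u ⊔ v) j ∧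
      ∀ k, k ≠ i → k ≠ j → (u ⊔ v) k < M k := by
  set p : Fin 4 → ℝ := u ⊔ v with hp
  have hule : ∀ k, u k ≤ p k := fun k => le_sup_left
  have hvle : ∀ k, v k ≤ p k := fun k => le_sup_right
  have hcover : ∀ k, p k = u k ∨ p k = v k := by
    intro k
    rcases le_total (u k) (v k) with h | h
    · exact Or.inr (show u k ⊔ v k = v k from sup_eq_right.mpr h)
    · exact Or.inl (show u k ⊔ v k = u k from sup_eq_left.mpr h)
  have hne0 : ∀ k, u k = v k → False := by
    intro k h
    have h0 : u k = 0 := hgen u hu v hv huv k h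
    have hpk0 : p k = 0 := by
      rcases hcover k with h1 | h1
      · rw [h1, h0]
      · rw [h1, ← h, h0]
    exact (hpos k).ne' hpk0
  have huj : u j < p j := lt_of_le_of_ne (hule j) (fun h => hne0 j (h.trans hpj))
  have hvi : v i < p i :=
    lt_of_le_of_ne (hvle i) (fun h => hne0 i (h.trans hpi).symm)
  have hij : i ≠ j := by
    intro h
    subst h
    exact hne0 i (hpi.symm.trans hpj)
  obtain ⟨hnn, hsus⟩ := hsusp
  choose B hB1 hB2 hB3 using hsus
  have hbound : ∀ r : Fin 4 → ℝ, InSurface V r → (∀ k, 0 < r k) → ∀ k, r k ≤ B k := by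
    intro r hr hrpos k
    by_contra hgt
    push_neg at hgt
    apply hr.2 _ (hB2 k)
    intro l
    by_cases hlk : l = k
    · subst hlk; simpa using hgt
    · simpa [hlk] using hrpos l
  set T : Set (Fin 4 → ℝ) := {r | InSurface V r ∧ p ≤ r ∧ r i = p i ∧ r j = p j} with hT
  have hTsub : T ⊆ Set.Icc p B := by
    intro r hr
    refine ⟨hr.2.1, ?_⟩
    intro k
    exact hbound r hr.1 (fun k => lt_of_lt_of_le (hpos k) (hr.2.1 k)) k
  have hTclosed : IsClosed T := by
    have h1 := isClosed_surface V
    have h2 : IsClosed {r : Fin 4 → ℝ | p ≤ r} := by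
      have : {r : Fin 4 → ℝ | p ≤ r} = ⋂ k, {r | p k ≤ r k} := by
        ext r; simp [Pi.le_def]
      rw [this]
      exact isClosed_iInter fun k => isClosed_le continuous_const (continuous_apply k)
    have h3 : IsClosed {r : Fin 4 → ℝ | r i = p i} :=
      isClosed_eq (continuous_apply i) continuous_const
    have h4 : IsClosed {r : Fin 4 → ℝ | r j = p j} :=
      isClosed_eq (continuous_apply j) continuous_const
    have : T = ({r : Fin 4 → ℝ | InSurface V r} ∩ {r | p ≤ r}) ∩
        ({r : Fin 4 → ℝ | r i = p i} ∩ {r | r j = p j}) := by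
      ext r
      simp only [hT, Set.mem_inter_iff, Set.mem_setOf_eq]
      tauto
    rw [this]
    exact (h1.inter h2).inter (h3.inter h4)
  have hTcomp : IsCompact T := isCompact_Icc.of_isClosed_subset hTclosed hTsub
  have hTne : T.Nonempty := ⟨p, hedge, le_refl p, rfl, rfl⟩
  have hfc : Continuous (fun r : Fin 4 → ℝ => ∑ k, r k) :=
    continuous_finset_sum _ fun k _ => continuous_apply k
  obtain ⟨M, hMT, hMmax⟩ := hTcomp.exists_isMaxOn hTne hfc.continuousOn
  obtain ⟨hMs, hMle, hMi, hMj⟩ := hMT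
  have stepA : ∀ k, k ≠ i → k ≠ j → ∀ ε : ℝ, 0 < ε →
      ¬ InSurface V (fun l => M l + if l = k then ε else 0) := by
    intro k hki hkj ε hε hin
    have hmem : (fun l => M l + if l = k then ε else 0) ∈ T := by
      refine ⟨hin, ?_, ?_, ?_⟩
      · intro l
        have := hMle l
        dsimp only
        split <;> linarith
      · show M i + (if i = k then ε else 0) = p i
        rw [if_neg (fun h => hki h.symm), add_zero]; exact hMi
      · show M j + (if j = k then ε else 0) = p j
        rw [if_neg (fun h => hkj h.symm), add_zero]; exact hMj
    have hle := isMaxOn_iff.mp hMmax _ hmem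
    have hsum : ∑ l, (M l + if l = k then ε else 0) = (∑ l, M l) + ε := by
      rw [Finset.sum_add_distrib]
      simp
    simp only [hsum] at hle
    linarith
  have stepB : ∀ k, k ≠ i → k ≠ j → p k < M k := by
    intro k hki hkj
    rcases lt_or_eq_of_le (hMle k) with h | h
    · exact h
    exfalso
    obtain ⟨w, hw, hwk, hwl⟩ := exists_blocker V M k hMs (stepA k hki hkj)
    rcases hcover k with hk | hk
    · have hwu : w = u := by
        by_contra hne
        have h0 : w k = 0 := hgen w hw u hu hne k (by rw [hwk, ← h, hk])
        exact (hpos k).ne' (h.trans (hwk.symm.trans h0))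
      have hlt : w i < M i := hwl i (Ne.symm hki)
      rw [hwu, hMi, hpi] at hlt
      exact lt_irrefl _ hlt
    · have hwv : w = v := by
        by_contra hne
        have h0 : w k = 0 := hgen w hw v hv hne k (by rw [hwk, ← h, hk])
        exact (hpos k).ne' (h.trans (hwk.symm.trans h0))
      have hlt : w j < M j := hwl j (Ne.symm hkj)
      rw [hwv, hMj, hpj] at hlt
      exact lt_irrefl _ hlt
  have stepC : ∀ ε : ℝ, 0 < ε → ¬ InSurface V (fun l => M l + if l = i then ε else 0) := by
    intro ε hε hin
    apply hin.2 u hu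
    intro l
    dsimp only
    by_cases hl : l = i
    · subst hl
      rw [if_pos rfl]
      have : M l = u l := hMi.trans hpi
      linarith
    · rw [if_neg hl, add_zero]
      by_cases hlj : l = j
      · subst hlj
        have := hMj
        linarith
      · have h1 := stepB l hl hlj
        have h2 := hule l
        linarith
  have stepD : ∀ ε : ℝ, 0 < ε → ¬ InSurface V (fun l => M l + if l = j then ε else 0) := by
    intro ε hε hin
    apply hin.2 v hv
    intro l
    dsimp only
    by_cases hl : l = j
    · subst hl
      rw [if_pos rfl]
      have : M l = v l := hMj.trans hpj
      linarith
    · rw [if_neg hl, add_zero]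
      by_cases hli : l = i
      · subst hli
        have := hMi
        linarith
      · have h1 := stepB l hli hl
        have h2 := hvle l
        linarith
  refine ⟨M, ⟨hMs, ?_⟩, hMle, hMi, hMj, stepB⟩
  intro k ε hε
  by_cases hk : k = i
  · subst hk; exact stepC ε hε
  by_cases hk2 : k = j
  · subst hk2; exact stepD ε hε
  · exact stepA k hk hk2 ε hε

/-- In a generic suspended orthogonal surface in `ℝ⁴`, every symmetric
edge (a join `p = u ⊔ v ∈ S_V` taking exactly two coordinates from each endpoint,
with all coordinates of `p` positive) is contained in at least four facets, i.e.
there are at least four distinct maxima of the surface above `p`. -/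
theorem stmt_17 (V : Finset (Fin 4 → ℝ))
    (hV : IsAntichain (· ≤ ·) (V : Set (Fin 4 → ℝ)))
    (hgen : ∀ u ∈ V, ∀ v ∈ V, u ≠ v → ∀ i, u i = v i → u i = 0)
    (hsusp : Suspended V)
    (u v : Fin 4 → ℝ) (hu : u ∈ V) (hv : v ∈ V) (huv : u ≠ v)
    (hedge : InSurface V (u ⊔ v))
    (hsym : (Finset.univ.filter (fun i : Fin 4 => (u ⊔ v) i = u i)).card = 2 ∧
            (Finset.univ.filter (fun i : Fin 4 => (u ⊔ v) i = v i)).card = 2)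
    (hpos : ∀ i, 0 < (u ⊔ v) i) :
    ∃ S : Finset (Fin 4 → ℝ), 4 ≤ S.card ∧
      ∀ M ∈ S, IsMaxPoint V M ∧ u ⊔ v ≤ M := by
  obtain ⟨i1, i2, hi12, hI⟩ := Finset.card_eq_two.mp hsym.1
  obtain ⟨j1, j2, hj12, hJ⟩ := Finset.card_eq_two.mp hsym.2
  have hpi1 : (u ⊔ v) i1 = u i1 := by
    have : i1 ∈ Finset.univ.filter (fun i : Fin 4 => (u ⊔ v) i = u i) := by
      rw [hI]; exact Finset.mem_insert_self _ _
    exact (Finset.mem_filter.mp this).2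
  have hpi2 : (u ⊔ v) i2 = u i2 := by
    have : i2 ∈ Finset.univ.filter (fun i : Fin 4 => (u ⊔ v) i = u i) := by
      rw [hI]; simp
    exact (Finset.mem_filter.mp this).2
  have hpj1 : (u ⊔ v) j1 = v j1 := by
    have : j1 ∈ Finset.univ.filter (fun i : Fin 4 => (u ⊔ v) i = v i) := by
      rw [hJ]; exact Finset.mem_insert_self _ _
    exact (Finset.mem_filter.mp this).2
  have hpj2 : (u ⊔ v) j2 = v j2 := by
    have : j2 ∈ Finset.univ.filter (fun i : Fin 4 => (u ⊔ v) i = v i) := by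
      rw [hJ]; simp
    exact (Finset.mem_filter.mp this).2
  have hIJ : ∀ k, (u ⊔ v) k = u k → (u ⊔ v) k = v k → False := by
    intro k h1 h2
    have h0 : u k = 0 := hgen u hu v hv huv k (h1.symm.trans h2)
    exact (hpos k).ne' (h1.trans h0)
  have n11 : i1 ≠ j1 := fun h => hIJ i1 hpi1 (by rw [h]; exact hpj1)
  have n12 : i1 ≠ j2 := fun h => hIJ i1 hpi1 (by rw [h]; exact hpj2)
  have n21 : i2 ≠ j1 := fun h => hIJ i2 hpi2 (by rw [h]; exact hpj1)
  have n22 : i2 ≠ j2 := fun h => hIJ i2 hpi2 (by rw [h]; exact hpj2)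
  obtain ⟨M11, hM11m, hM11le, hM11i, hM11j, hM11s⟩ :=
    construct V hgen hsusp u v hu hv huv hedge hpos i1 j1 hpi1 hpj1
  obtain ⟨M12, hM12m, hM12le, hM12i, hM12j, hM12s⟩ :=
    construct V hgen hsusp u v hu hv huv hedge hpos i1 j2 hpi1 hpj2
  obtain ⟨M21, hM21m, hM21le, hM21i, hM21j, hM21s⟩ :=
    construct V hgen hsusp u v hu hv huv hedge hpos i2 j1 hpi2 hpj1
  obtain ⟨M22, hM22m, hM22le, hM22i, hM22j, hM22s⟩ :=
    construct V hgen hsusp u v hu hv huv hedge hpos i2 j2 hpi2 hpj2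
  have d1 : M11 ≠ M12 := by
    intro h
    have hlt := hM11s j2 (Ne.symm n12) (Ne.symm hj12)
    rw [h, hM12j] at hlt
    exact lt_irrefl _ hlt
  have d2 : M11 ≠ M21 := by
    intro h
    have hlt := hM11s i2 (Ne.symm hi12) n21
    rw [h, hM21i] at hlt
    exact lt_irrefl _ hlt
  have d3 : M11 ≠ M22 := by
    intro h
    have hlt := hM11s i2 (Ne.symm hi12) n21
    rw [h, hM22i] at hlt
    exact lt_irrefl _ hlt
  have d4 : M12 ≠ M21 := by
    intro h
    have hlt := hM21s i1 hi12 n11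
    rw [← h, hM12i] at hlt
    exact lt_irrefl _ hlt
  have d5 : M12 ≠ M22 := by
    intro h
    have hlt := hM12s i2 (Ne.symm hi12) n22
    rw [h, hM22i] at hlt
    exact lt_irrefl _ hlt
  have d6 : M21 ≠ M22 := by
    intro h
    have hlt := hM21s j2 (Ne.symm n22) (Ne.symm hj12)
    rw [h, hM22j] at hlt
    exact lt_irrefl _ hlt
  refine ⟨{M11, M12, M21, M22}, ?_, ?_⟩
  · have h1 : M11 ∉ ({M12, M21, M22} : Finset (Fin 4 → ℝ)) := by
      simp [d1, d2, d3]
    have h2 : M12 ∉ ({M21, M22} : Finset (Fin 4 → ℝ)) := by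
      simp [d4, d5]
    have h3 : M21 ∉ ({M22} : Finset (Fin 4 → ℝ)) := by
      simp [d6]
    rw [Finset.card_insert_of_notMem h1, Finset.card_insert_of_notMem h2,
      Finset.card_insert_of_notMem h3, Finset.card_singleton]
  · intro M hM
    simp only [Finset.mem_insert, Finset.mem_singleton] at hM
    rcases hM with rfl | rfl | rfl | rfl
    · exact ⟨hM11m, hM11le⟩
    · exact ⟨hM12m, hM12le⟩
    · exact ⟨hM21m, hM21le⟩
    · exact ⟨hM22m, hM22le⟩
end
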